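/- arXiv:2011.07266 — 3 statements merged into one kernel-verified Lean document; each statement's English description precedes it below -/
import Mathlib

section
/- Let X be a random variable taking values in the positive integers with P(X > x) ~ c·x^{-β} as x → ∞ for some constants c > 0 and β > 0, and let Y be a nonnegative random variable (possibly dependent on X). Suppose there exist m, z > 0 and C < ∞ with m ≠ β/z such that for all n ≥ 1 and all λ ≥ 1, P(Y ≥ λ·n^z | X = n) ≤ C·λ^{-m}. Then there exists a constant C' < ∞ (depending on m, z, β, c, C) such that P(Y ≥ k) ≤ C'·k^{-(min(β/z, m))} for all k ≥ 1. -/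
/-!
Only the bound `P(X ≥ n) ≤ K n^(-β)` is taken from the regularly varying tail. Choose `L` with
`2^L ≤ k^(1/z) < 2^(L+1)` and split `{k ≤ Y}` according to the dyadic block `2^i ≤ X < 2^(i+1)`
containing `X`. The part with `X ≥ 2^L` has probability `≲ 2^(-Lβ) ≲ k^(-β/z)`. On a block with
`i < L` every value `n` of `X` satisfies `n^z ≤ k`, so the conditional bound with
`λ = k / 2^((i+1)z)` gives probability `≤ C λ^(-m) P(X ≥ 2^i) ≲ k^(-m) (2^(zm-β))^i`.
The geometric sum over `i < L` is bounded when `zm < β`, which gives `k^(-m)`, and is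
`≲ 2^(L(zm-β)) ≤ k^(m-β/z)` when `zm > β`, which gives `k^(-β/z)`.
-/

open MeasureTheory ProbabilityTheory Filter Real

open Finset Asymptotics

lemma exists_le_mul_add_one_rpow_neg_of_tendsto {f : ℕ → ℝ} {c β : ℝ} (hc : 0 < c) (hβ : 0 ≤ β)
    (h : Tendsto (fun x : ℕ => f x / (c * (x : ℝ) ^ (-β))) atTop (nhds 1)) :
    ∃ K, ∀ x : ℕ, f x ≤ K * ((x : ℝ) + 1) ^ (-β) := by
  have hpos : ∀ x : ℕ, 1 ≤ x → 0 < c * (x : ℝ) ^ (-β) := fun x hx =>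
    mul_pos hc (rpow_pos_of_pos (by exact_mod_cast hx) _)
  have hf : f =O[atTop] fun x : ℕ => c * (x : ℝ) ^ (-β) := by
    refine isBigO_of_div_tendsto_nhds ?_ 1 h
    filter_upwards [eventually_ge_atTop 1] with x hx h0
    exact absurd h0 (hpos x hx).ne'
  have hshift : (fun x : ℕ => c * (x : ℝ) ^ (-β)) =O[atTop] fun x : ℕ => ((x : ℝ) + 1) ^ (-β) := by
    refine IsBigO.of_bound (c * 2 ^ β) ?_
    filter_upwards [eventually_ge_atTop 1] with x hx
    have hx1 : (1 : ℝ) ≤ x := by exact_mod_cast hx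
    have hhalf : (((x : ℝ) + 1) / 2) ^ (-β) = 2 ^ β * ((x : ℝ) + 1) ^ (-β) := by
      rw [div_rpow (by positivity) zero_le_two, rpow_neg zero_le_two, div_inv_eq_mul, mul_comm]
    rw [norm_of_nonneg (hpos x hx).le, norm_of_nonneg (by positivity), mul_assoc, ← hhalf]
    exact mul_le_mul_of_nonneg_left
      (rpow_le_rpow_of_nonpos (by positivity) (by linarith) (neg_nonpos.2 hβ)) hc.le
  rw [← Nat.cofinite_eq_atTop] at hf hshift
  obtain ⟨K, hK⟩ := (isBigO_cofinite_iff fun x h0 => absurd h0 (by positivity)).1 (hf.trans hshift)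
  refine ⟨K, fun x => (le_abs_self _).trans ?_⟩
  simpa only [Real.norm_eq_abs, abs_of_pos (show (0 : ℝ) < ((x : ℝ) + 1) ^ (-β) by positivity)]
    using hK x

section

variable {Ω : Type*} [MeasurableSpace Ω] {μ : Measure Ω} {X : Ω → ℕ} {Y : Ω → ℝ} {z m C K β : ℝ}

def HasCondTailBound (μ : Measure Ω) (X : Ω → ℕ) (Y : Ω → ℝ) (z m C : ℝ) : Prop :=
  ∀ n : ℕ, 1 ≤ n → ∀ lam : ℝ, 1 ≤ lam →
    (μ[|{ω | X ω = n}] {ω | lam * (n : ℝ) ^ z ≤ Y ω}).toReal ≤ C * lam ^ (-m)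

lemma HasCondTailBound.nonneg (h : HasCondTailBound μ X Y z m C) : 0 ≤ C := by
  simpa using ENNReal.toReal_nonneg.trans (h 1 le_rfl 1 le_rfl)

lemma HasCondTailBound.measureReal_inter_le [IsFiniteMeasure μ] (h : HasCondTailBound μ X Y z m C)
    (hX : Measurable X) (hz : 0 ≤ z) {S : Finset ℕ} {b lam : ℝ}
    (hS : ∀ n ∈ S, 1 ≤ n ∧ (n : ℝ) ≤ b) (hlam : 1 ≤ lam) :
    μ.real ({ω | X ω ∈ S} ∩ {ω | lam * b ^ z ≤ Y ω}) ≤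
      C * lam ^ (-m) * μ.real {ω | X ω ∈ S} := by
  have hmeas : ∀ n, MeasurableSet {ω | X ω = n} := fun n => hX (measurableSet_singleton n)
  have hfiber : ∀ n ∈ S, μ.real ({ω | X ω = n} ∩ {ω | lam * b ^ z ≤ Y ω}) ≤
      C * lam ^ (-m) * μ.real {ω | X ω = n} := by
    intro n hn
    have hthr : lam * (n : ℝ) ^ z ≤ lam * b ^ z := by
      gcongr
      exact (hS n hn).2
    calc μ.real ({ω | X ω = n} ∩ {ω | lam * b ^ z ≤ Y ω})
        ≤ μ.real ({ω | X ω = n} ∩ {ω | lam * (n : ℝ) ^ z ≤ Y ω}) :=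
          measureReal_mono fun ω hω => ⟨hω.1, hthr.trans hω.2⟩
      _ = (μ[|{ω | X ω = n}] {ω | lam * (n : ℝ) ^ z ≤ Y ω}).toReal * μ.real {ω | X ω = n} := by
          rw [measureReal_def, ← cond_mul_eq_inter (hmeas n), ENNReal.toReal_mul, measureReal_def]
      _ ≤ C * lam ^ (-m) * μ.real {ω | X ω = n} :=
          mul_le_mul_of_nonneg_right (h n (hS n hn).1 lam hlam) measureReal_nonneg
  have hfibers : ∀ A : Set Ω, {ω | X ω ∈ S} ∩ A = ⋃ n ∈ S, {ω | X ω = n} ∩ A := by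
    intro A; ext ω; simp
  have hdisj : Set.PairwiseDisjoint (↑S) fun n => {ω | X ω = n} :=
    fun i _ j _ hij => Set.disjoint_left.2 fun ω hi hj => hij (hi.symm.trans hj)
  calc μ.real ({ω | X ω ∈ S} ∩ {ω | lam * b ^ z ≤ Y ω})
      ≤ ∑ n ∈ S, μ.real ({ω | X ω = n} ∩ {ω | lam * b ^ z ≤ Y ω}) := by
        rw [hfibers]; exact measureReal_biUnion_finset_le _ _
    _ ≤ ∑ n ∈ S, C * lam ^ (-m) * μ.real {ω | X ω = n} := sum_le_sum hfiber
    _ = C * lam ^ (-m) * μ.real {ω | X ω ∈ S} := by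
        rw [← mul_sum, ← measureReal_biUnion_finset hdisj fun n _ => hmeas n]
        congr; ext ω; simp

lemma measureReal_le_add_sum_dyadic [IsFiniteMeasure μ] (hXpos : ∀ ω, 1 ≤ X ω) (A : Set Ω)
    (L : ℕ) :
    μ.real A ≤ μ.real {ω | 2 ^ L ≤ X ω} +
      ∑ i ∈ range L, μ.real ({ω | X ω ∈ Ico (2 ^ i) (2 ^ (i + 1))} ∩ A) := by
  have hcover : A ⊆ {ω | 2 ^ L ≤ X ω} ∪
      ⋃ i ∈ range L, ({ω | X ω ∈ Ico (2 ^ i) (2 ^ (i + 1))} ∩ A) := by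
    intro ω hω
    by_cases hL : 2 ^ L ≤ X ω
    · exact Or.inl hL
    have hlog : 2 ^ Nat.log 2 (X ω) ≤ X ω := Nat.pow_log_le_self 2 (by have := hXpos ω; omega)
    refine Or.inr (Set.mem_iUnion₂.2 ⟨Nat.log 2 (X ω), ?_, ?_, hω⟩)
    · exact mem_range.2
        ((Nat.pow_lt_pow_iff_right one_lt_two).1 (hlog.trans_lt (not_le.1 hL)))
    · exact mem_Ico.2 ⟨hlog, Nat.lt_pow_succ_log_self one_lt_two _⟩
  calc μ.real A ≤ _ := measureReal_mono hcover
    _ ≤ _ := (measureReal_union_le _ _).trans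
        (add_le_add le_rfl (measureReal_biUnion_finset_le _ _))

lemma HasCondTailBound.measureReal_le_of_two_pow_le [IsFiniteMeasure μ]
    (h : HasCondTailBound μ X Y z m C) (hX : Measurable X) (hXpos : ∀ ω, 1 ≤ X ω) (hz : 0 ≤ z)
    (hK : ∀ n : ℕ, 1 ≤ n → μ.real {ω | n ≤ X ω} ≤ K * (n : ℝ) ^ (-β))
    {k : ℝ} (hk : 0 < k) {L : ℕ} (hL : ((2 : ℝ) ^ L) ^ z ≤ k) :
    μ.real {ω | k ≤ Y ω} ≤ K * ((2 : ℝ) ^ L) ^ (-β) +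
      C * K * 2 ^ (z * m) * k ^ (-m) * ∑ i ∈ range L, ((2 : ℝ) ^ (z * m - β)) ^ i := by
  refine (measureReal_le_add_sum_dyadic hXpos _ L).trans (add_le_add ?_ ?_)
  · exact_mod_cast hK (2 ^ L) Nat.one_le_two_pow
  rw [mul_sum]
  refine sum_le_sum fun i hi => ?_
  have hblock : ((2 : ℝ) ^ (i + 1)) ^ z ≤ k :=
    (rpow_le_rpow (by positivity) (pow_le_pow_right₀ one_le_two (mem_range.1 hi)) hz).trans hL
  set lam := k / ((2 : ℝ) ^ (i + 1)) ^ z with hlam_def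
  have hlam : 1 ≤ lam := (one_le_div (by positivity)).2 hblock
  have hthr : {ω | k ≤ Y ω} = {ω | lam * ((2 : ℝ) ^ (i + 1)) ^ z ≤ Y ω} := by
    rw [div_mul_cancel₀ _ (by positivity)]
  have hS : ∀ n ∈ (Ico (2 ^ i) (2 ^ (i + 1)) : Finset ℕ), 1 ≤ n ∧ (n : ℝ) ≤ 2 ^ (i + 1) :=
    fun n hn => ⟨Nat.one_le_two_pow.trans (mem_Ico.1 hn).1, by exact_mod_cast (mem_Ico.1 hn).2.le⟩
  have hsub : {ω | X ω ∈ Ico (2 ^ i) (2 ^ (i + 1))} ⊆ {ω | 2 ^ i ≤ X ω} :=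
    fun ω (hω : X ω ∈ Ico _ _) => (mem_Ico.1 hω).1
  have htail : μ.real {ω | X ω ∈ Ico (2 ^ i) (2 ^ (i + 1))} ≤ K * ((2 : ℝ) ^ i) ^ (-β) :=
    (measureReal_mono hsub).trans (by exact_mod_cast hK (2 ^ i) Nat.one_le_two_pow)
  have hscale :
      lam ^ (-m) * ((2 : ℝ) ^ i) ^ (-β) = 2 ^ (z * m) * k ^ (-m) * (2 ^ (z * m - β)) ^ i := by
    have h2 : ∀ (n : ℕ) (s : ℝ), ((2 : ℝ) ^ n) ^ s = 2 ^ (n * s) := fun n s => by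
      rw [← rpow_natCast, ← rpow_mul zero_le_two]
    rw [hlam_def, h2, h2, div_rpow hk.le (by positivity), ← rpow_mul zero_le_two,
      rpow_pow_comm zero_le_two, h2, div_eq_mul_inv, ← rpow_neg zero_le_two, mul_right_comm,
      mul_assoc, ← rpow_add two_pos, mul_right_comm ((2 : ℝ) ^ (z * m)), ← rpow_add two_pos,
      mul_comm]
    push_cast
    ring_nf
  calc μ.real ({ω | X ω ∈ Ico (2 ^ i) (2 ^ (i + 1))} ∩ {ω | k ≤ Y ω})
      ≤ C * lam ^ (-m) * μ.real {ω | X ω ∈ Ico (2 ^ i) (2 ^ (i + 1))} := by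
        rw [hthr]; exact h.measureReal_inter_le hX hz hS hlam
    _ ≤ C * lam ^ (-m) * (K * ((2 : ℝ) ^ i) ^ (-β)) :=
        mul_le_mul_of_nonneg_left htail (mul_nonneg h.nonneg (by positivity))
    _ = C * K * 2 ^ (z * m) * k ^ (-m) * (2 ^ (z * m - β)) ^ i := by
        linear_combination C * K * hscale

lemma HasCondTailBound.exists_measureReal_le [IsFiniteMeasure μ]
    (h : HasCondTailBound μ X Y z m C) (hX : Measurable X) (hXpos : ∀ ω, 1 ≤ X ω) (hz : 0 < z)
    (hβ : 0 ≤ β) (hK0 : 0 ≤ K) (hK : ∀ n : ℕ, 1 ≤ n → μ.real {ω | n ≤ X ω} ≤ K * (n : ℝ) ^ (-β))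
    {k : ℝ} (hk : 1 ≤ k) :
    ∃ L : ℕ, ((2 : ℝ) ^ L) ^ z ≤ k ∧ μ.real {ω | k ≤ Y ω} ≤ K * 2 ^ β * k ^ (-(β / z)) +
      C * K * 2 ^ (z * m) * k ^ (-m) * ∑ i ∈ range L, ((2 : ℝ) ^ (z * m - β)) ^ i := by
  have hk0 : 0 < k := by linarith
  obtain ⟨L, hL, hL'⟩ := exists_nat_pow_near (one_le_rpow hk (inv_nonneg.2 hz.le)) one_lt_two
  have hLk : ((2 : ℝ) ^ L) ^ z ≤ k := by
    calc ((2 : ℝ) ^ L) ^ z ≤ (k ^ z⁻¹) ^ z := rpow_le_rpow (by positivity) hL hz.le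
      _ = k := by rw [← rpow_mul hk0.le, inv_mul_cancel₀ hz.ne', rpow_one]
  have htail : ((2 : ℝ) ^ L) ^ (-β) ≤ 2 ^ β * k ^ (-(β / z)) := by
    calc ((2 : ℝ) ^ L) ^ (-β) = 2 ^ β * ((2 : ℝ) ^ (L + 1)) ^ (-β) := by
          rw [pow_succ, mul_rpow (by positivity) zero_le_two, rpow_neg zero_le_two]
          field_simp
      _ ≤ 2 ^ β * (k ^ z⁻¹) ^ (-β) := mul_le_mul_of_nonneg_left
          (rpow_le_rpow_of_nonpos (by positivity) hL'.le (neg_nonpos.2 hβ)) (by positivity)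
      _ = 2 ^ β * k ^ (-(β / z)) := by
          rw [← rpow_mul hk0.le]; ring_nf
  refine ⟨L, hLk, (h.measureReal_le_of_two_pow_le hX hXpos hz.le hK hk0 hLk).trans ?_⟩
  rw [mul_assoc K]
  gcongr

lemma HasCondTailBound.exists_measureReal_le_rpow_of_mul_lt [IsFiniteMeasure μ]
    (h : HasCondTailBound μ X Y z m C) (hX : Measurable X) (hXpos : ∀ ω, 1 ≤ X ω) (hz : 0 < z)
    (hβ : 0 ≤ β) (hK0 : 0 ≤ K) (hK : ∀ n : ℕ, 1 ≤ n → μ.real {ω | n ≤ X ω} ≤ K * (n : ℝ) ^ (-β))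
    (hmz : z * m < β) :
    ∃ C' : ℝ, ∀ k : ℝ, 1 ≤ k → μ.real {ω | k ≤ Y ω} ≤ C' * k ^ (-m) := by
  refine ⟨K * 2 ^ β + C * K * 2 ^ (z * m) * (1 - 2 ^ (z * m - β))⁻¹, fun k hk => ?_⟩
  obtain ⟨L, -, hY⟩ := h.exists_measureReal_le hX hXpos hz hβ hK0 hK hk
  have hr0 : 0 ≤ (2 : ℝ) ^ (z * m - β) := by positivity
  have hr1 : (2 : ℝ) ^ (z * m - β) < 1 := rpow_lt_one_of_one_lt_of_neg one_lt_two (by linarith)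
  have hgeom : ∑ i ∈ range L, ((2 : ℝ) ^ (z * m - β)) ^ i ≤ (1 - 2 ^ (z * m - β))⁻¹ :=
    ((summable_geometric_of_lt_one hr0 hr1).sum_le_tsum _ fun i _ => by positivity).trans_eq
      (tsum_geometric_of_lt_one hr0 hr1)
  have hexp : k ^ (-(β / z)) ≤ k ^ (-m) :=
    rpow_le_rpow_of_exponent_le hk (neg_le_neg ((le_div_iff₀ hz).2 (by linarith)))
  have hC := h.nonneg
  calc μ.real {ω | k ≤ Y ω} ≤ _ := hY
    _ ≤ K * 2 ^ β * k ^ (-m) + C * K * 2 ^ (z * m) * k ^ (-m) * (1 - 2 ^ (z * m - β))⁻¹ := by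
        gcongr
    _ = _ := by ring

lemma HasCondTailBound.exists_measureReal_le_rpow_of_lt_mul [IsFiniteMeasure μ]
    (h : HasCondTailBound μ X Y z m C) (hX : Measurable X) (hXpos : ∀ ω, 1 ≤ X ω) (hz : 0 < z)
    (hβ : 0 ≤ β) (hK0 : 0 ≤ K) (hK : ∀ n : ℕ, 1 ≤ n → μ.real {ω | n ≤ X ω} ≤ K * (n : ℝ) ^ (-β))
    (hmz : β < z * m) :
    ∃ C' : ℝ, ∀ k : ℝ, 1 ≤ k → μ.real {ω | k ≤ Y ω} ≤ C' * k ^ (-(β / z)) := by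
  refine ⟨K * 2 ^ β + C * K * 2 ^ (z * m) * (2 ^ (z * m - β) - 1)⁻¹, fun k hk => ?_⟩
  obtain ⟨L, hL, hY⟩ := h.exists_measureReal_le hX hXpos hz hβ hK0 hK hk
  set r : ℝ := 2 ^ (z * m - β)
  have hr : 1 < r := one_lt_rpow one_lt_two (by linarith)
  have hinv : 0 ≤ (r - 1)⁻¹ := inv_nonneg.2 (by linarith)
  have hgeom : ∑ i ∈ range L, r ^ i ≤ r ^ L * (r - 1)⁻¹ := by
    rw [geom_sum_eq hr.ne', div_eq_mul_inv]
    exact mul_le_mul_of_nonneg_right (by linarith) hinv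
  have hpow : k ^ (-m) * r ^ L ≤ k ^ (-(β / z)) := by
    have hrL : r ^ L = (((2 : ℝ) ^ L) ^ z) ^ ((z * m - β) / z) := by
      rw [rpow_pow_comm zero_le_two, ← rpow_mul (by positivity), mul_div_cancel₀ _ hz.ne']
    calc k ^ (-m) * r ^ L ≤ k ^ (-m) * k ^ ((z * m - β) / z) := by
          rw [hrL]; gcongr
      _ = k ^ (-(β / z)) := by
          rw [← rpow_add (by linarith)]; congr 1; field_simp; ring
  have hC := h.nonneg
  calc μ.real {ω | k ≤ Y ω} ≤ _ := hY
    _ ≤ K * 2 ^ β * k ^ (-(β / z)) + C * K * 2 ^ (z * m) * k ^ (-m) * (r ^ L * (r - 1)⁻¹) := by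
        gcongr
    _ = K * 2 ^ β * k ^ (-(β / z)) + C * K * 2 ^ (z * m) * (r - 1)⁻¹ * (k ^ (-m) * r ^ L) := by
        ring
    _ ≤ K * 2 ^ β * k ^ (-(β / z)) + C * K * 2 ^ (z * m) * (r - 1)⁻¹ * k ^ (-(β / z)) := by
        gcongr
    _ = _ := by ring

end

theorem stmt_0_general
    {Ω : Type*} [MeasureSpace Ω] [IsProbabilityMeasure (ℙ : Measure Ω)]
    (X : Ω → ℕ) (Y : Ω → ℝ) (hXmeas : Measurable X)
    (hXpos : ∀ ω, 1 ≤ X ω)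
    (c β : ℝ) (hc : 0 < c) (hβ : 0 < β)
    (htail : Tendsto (fun x : ℕ => (ℙ {ω | x < X ω}).toReal / (c * (x : ℝ) ^ (-β)))
      atTop (nhds 1))
    (m z C : ℝ) (hz : 0 < z) (hmz : m ≠ β / z)
    (hcond : ∀ n : ℕ, 1 ≤ n → ∀ lam : ℝ, 1 ≤ lam →
      ((ℙ[|{ω | X ω = n}]) {ω | lam * (n : ℝ) ^ z ≤ Y ω}).toReal ≤ C * lam ^ (-m)) :
    ∃ C' : ℝ, ∀ k : ℝ, 1 ≤ k →
      (ℙ {ω | k ≤ Y ω}).toReal ≤ C' * k ^ (-(min (β / z) m)) := by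
  have hcond : HasCondTailBound ℙ X Y z m C := hcond
  obtain ⟨K, hK⟩ := exists_le_mul_add_one_rpow_neg_of_tendsto hc hβ.le htail
  have hKX : ∀ n : ℕ, 1 ≤ n → (ℙ : Measure Ω).real {ω | n ≤ X ω} ≤ K * (n : ℝ) ^ (-β) := by
    intro n hn
    have hset : {ω | n ≤ X ω} = {ω | n - 1 < X ω} := by
      ext ω; change n ≤ X ω ↔ n - 1 < X ω; omega
    simpa [hset, Nat.cast_sub hn, measureReal_def] using hK (n - 1)
  have hK0 : 0 ≤ K := by simpa using measureReal_nonneg.trans (hKX 1 le_rfl)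
  rcases lt_or_gt_of_ne hmz with hlt | hgt
  · rw [min_eq_right hlt.le]
    exact hcond.exists_measureReal_le_rpow_of_mul_lt hXmeas hXpos hz hβ.le hK0 hKX
      (by rwa [lt_div_iff₀ hz, mul_comm] at hlt)
  · rw [min_eq_left hgt.le]
    exact hcond.exists_measureReal_le_rpow_of_lt_mul hXmeas hXpos hz hβ.le hK0 hKX
      (by rwa [div_lt_iff₀ hz, mul_comm] at hgt)

theorem stmt_0
    {Ω : Type*} [MeasureSpace Ω] [IsProbabilityMeasure (ℙ : Measure Ω)]
    (X : Ω → ℕ) (Y : Ω → ℝ) (hXmeas : Measurable X) (hYmeas : Measurable Y)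
    (hXpos : ∀ ω, 1 ≤ X ω) (hYnn : ∀ ω, 0 ≤ Y ω)
    (c β : ℝ) (hc : 0 < c) (hβ : 0 < β)
    (htail : Tendsto (fun x : ℕ => (ℙ {ω | x < X ω}).toReal / (c * (x : ℝ) ^ (-β)))
      atTop (nhds 1))
    (m z C : ℝ) (hm : 0 < m) (hz : 0 < z) (hmz : m ≠ β / z)
    (hcond : ∀ n : ℕ, 1 ≤ n → ∀ lam : ℝ, 1 ≤ lam →
      ((ℙ[|{ω | X ω = n}]) {ω | lam * (n : ℝ) ^ z ≤ Y ω}).toReal ≤ C * lam ^ (-m)) :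
    ∃ C' : ℝ, ∀ k : ℝ, 1 ≤ k →
      (ℙ {ω | k ≤ Y ω}).toReal ≤ C' * k ^ (-(min (β / z) m)) :=
  stmt_0_general X Y hXmeas hXpos c β hc hβ htail m z C hz hmz hcond
end

section
/- Let (X_i)_{i≥1} be nonnegative i.i.d. random variables with P(X_1 > x) ~ c·x^{-1} as x → ∞ for some c ∈ (0,∞). For k ≥ 1 let T^{(k)} = inf{i ≥ 1 : X_i > k} and S^{(k)} = Σ_{i=1}^{T^{(k)}-1} X_i. Then there exist constants c', C' ∈ (0,∞) such that for all k ≥ 2 and all λ ≥ 1, P(S^{(k)} ≥ λ·k·log k) ≤ C'·e^{-c'·λ}. -/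
/-!
Let `m = E[exp (t X); X ≤ k]` and `p = P(X > k)`. For `t ≥ 0`, Markov's inequality applied to
`∏_{i<n} exp (t X_i) 1{X_i ≤ k} · 1{X_n > k}`, whose mean factorises as `m ^ n p` by
independence, bounds the probability that the first exceedance of `k` happens at time `n` after
a sum `≥ s` by `exp (-t s) m ^ n p`; the same argument shows that `k` is exceeded almost surely
once `m < 1`. Summing the geometric series gives `exp (-t s) p / (1 - m)`.

For the Cauchy tail, `p ≳ 1/k`, while the layer-cake formula gives
`E[X; X ≤ k] ≤ ∫₀ᵏ P(X > x) dx = O(log k)`. As `exp y ≤ 1 + 2y` on `[0, log 2]`,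
`m ≤ 1 - p + 2 t E[X; X ≤ k]`, and `t = c' / (k log k)` with `c'` small enough makes the last
term at most `p / 2`. Hence `m ≤ 1 - p / 2`, the bound is `2 exp (-t s)`, and `s = λ k log k`
gives `t s = c' λ`.
-/

open MeasureTheory ProbabilityTheory Filter Real

open Set Finset Topology

lemma exp_le_one_add_two_mul {y : ℝ} (hy : 0 ≤ y) (hy2 : y ≤ log 2) : exp y ≤ 1 + 2 * y := by
  have h2 : exp y ≤ 2 := (exp_le_exp.2 hy2).trans_eq (exp_log two_pos)
  have h1 : exp y * (1 - y) ≤ 1 := by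
    have := mul_le_mul_of_nonneg_left (by linarith [add_one_le_exp (-y)] : 1 - y ≤ exp (-y))
      (exp_pos y).le
    rwa [← exp_add, add_neg_cancel, exp_zero] at this
  nlinarith

noncomputable def truncExp (k t : ℝ) : ℝ → ℝ := (Iic k).indicator fun x => exp (t * x)

lemma measurable_truncExp (k t : ℝ) : Measurable (truncExp k t) :=
  (measurable_const.mul measurable_id).exp.indicator measurableSet_Iic

lemma truncExp_of_le {k t x : ℝ} (hx : x ≤ k) : truncExp k t x = exp (t * x) :=
  indicator_of_mem (show x ∈ Iic k from hx) _

lemma truncExp_nonneg (k t x : ℝ) : 0 ≤ truncExp k t x :=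
  indicator_nonneg (fun _ _ => (exp_pos _).le) x

lemma truncExp_le {k t : ℝ} (ht : 0 ≤ t) (x : ℝ) : truncExp k t x ≤ exp (t * k) := by
  by_cases hx : x ∈ Iic k
  · rw [truncExp, indicator_of_mem hx]
    exact exp_le_exp.2 (mul_le_mul_of_nonneg_left hx ht)
  · rw [truncExp, indicator_of_notMem hx]
    exact (exp_pos _).le

lemma truncExp_le_indicator_add {k t : ℝ} (ht : 0 ≤ t) (htk : t * k ≤ log 2) {x : ℝ}
    (hx : 0 ≤ x) : truncExp k t x ≤ (Iic k).indicator 1 x + 2 * t * (Iic k).indicator id x := by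
  by_cases hxk : x ∈ Iic k
  · simp only [truncExp, indicator_of_mem hxk, Pi.one_apply, id]
    have := exp_le_one_add_two_mul (mul_nonneg ht hx)
      ((mul_le_mul_of_nonneg_left hxk ht).trans htk)
    linarith
  · simp [truncExp, indicator_of_notMem hxk]

lemma eventually_tail_bounds_of_tendsto {f : ℝ → ℝ} {c : ℝ} (hc : 0 < c)
    (h : Tendsto (fun x => f x / (c * x ^ (-(1 : ℝ)))) atTop (𝓝 1)) :
    ∀ᶠ x in atTop, c / (2 * x) ≤ f x ∧ f x ≤ 2 * c / x := by
  filter_upwards [h.eventually (Ioo_mem_nhds (by norm_num : (1 / 2 : ℝ) < 1) one_lt_two),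
    eventually_gt_atTop 0] with x ⟨hlo, hhi⟩ hx
  rw [rpow_neg_one, lt_div_iff₀ (by positivity)] at hlo
  rw [rpow_neg_one, div_lt_iff₀ (by positivity)] at hhi
  constructor
  · rw [div_le_iff₀ (by positivity)]
    field_simp at hlo ⊢
    nlinarith
  · rw [le_div_iff₀ hx]
    field_simp at hhi ⊢
    nlinarith

lemma div_mul_le_of_antitone {f : ℝ → ℝ} (hf : Antitone f) {c x₀ : ℝ} (hc : 0 ≤ c)
    (hx₀ : 2 ≤ x₀) (h : ∀ x, x₀ ≤ x → c / (2 * x) ≤ f x) {k : ℝ} (hk : 2 ≤ k) :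
    c / (x₀ * k) ≤ f k :=
  calc c / (x₀ * k) ≤ c / (2 * max k x₀) := by
        apply div_le_div_of_nonneg_left hc (by positivity)
        rcases le_total k x₀ with h | h <;> simp only [h, max_eq_left, max_eq_right] <;> nlinarith
    _ ≤ f (max k x₀) := h _ (le_max_right _ _)
    _ ≤ f k := hf (le_max_left _ _)

lemma intervalIntegral_le_add_mul_log_of_antitone {ψ : ℝ → ℝ} (hψ : Antitone ψ)
    (hψ_one : ∀ x, ψ x ≤ 1) {C x₀ k : ℝ} (hx₀ : 0 < x₀) (hxk : x₀ ≤ k)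
    (hψ_tail : ∀ x ∈ Icc x₀ k, ψ x ≤ C * x⁻¹) :
    ∫ x in (0)..k, ψ x ≤ x₀ + C * log (k / x₀) :=
  calc ∫ x in (0)..k, ψ x = (∫ x in (0)..x₀, ψ x) + ∫ x in x₀..k, ψ x :=
        (intervalIntegral.integral_add_adjacent_intervals hψ.intervalIntegrable
          hψ.intervalIntegrable).symm
    _ ≤ (∫ _ in (0)..x₀, (1 : ℝ)) + ∫ x in x₀..k, C * x⁻¹ := by
        gcongr ?_ + ?_
        · exact intervalIntegral.integral_mono_on hx₀.le hψ.intervalIntegrable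
            intervalIntegrable_const fun x _ => hψ_one x
        · exact intervalIntegral.integral_mono_on hxk hψ.intervalIntegrable
            ((intervalIntegral.intervalIntegrable_inv (fun x hx => by
              rw [uIcc_of_le hxk] at hx; exact (hx₀.trans_le hx.1).ne')
              continuousOn_id).const_mul C) hψ_tail
    _ = x₀ + C * log (k / x₀) := by
        simp [integral_inv_of_pos hx₀ (hx₀.trans_le hxk)]

lemma exists_first_gt_or_forall_le {x : ℕ → ℝ} (hx : ∀ i, 0 ≤ x i) {k s : ℝ} {n₀ : ℕ}
    (hle : ∀ i < n₀, x i ≤ k) (hs : s ≤ ∑ i ∈ range n₀, x i) :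
    (∀ i, x i ≤ k) ∨ ∃ n, (∀ i < n, x i ≤ k) ∧ s ≤ ∑ i ∈ range n, x i ∧ k < x n := by
  by_cases hall : ∀ i, x i ≤ k
  · exact Or.inl hall
  push Not at hall
  classical
  have hn₀ : n₀ ≤ Nat.find hall := le_of_not_gt fun h => (Nat.find_spec hall).not_ge (hle _ h)
  exact Or.inr ⟨Nat.find hall, fun i hi => not_lt.1 (Nat.find_min hall hi),
    hs.trans (sum_le_sum_of_subset_of_nonneg (range_subset_range.2 hn₀) fun i _ _ => hx i),
    Nat.find_spec hall⟩

section

variable {Ω : Type*} {mΩ : MeasurableSpace Ω} {μ : Measure Ω}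

lemma integral_indicator_one_comp {Y : Ω → ℝ} (hY : Measurable Y) {A : Set ℝ}
    (hA : MeasurableSet A) : ∫ ω, A.indicator 1 (Y ω) ∂μ = μ.real (Y ⁻¹' A) := by
  simp_rw [← indicator_comp_right, Pi.one_comp]
  exact integral_indicator_one (hY hA)

lemma integrable_prod_range_comp [IsFiniteMeasure μ] {X : ℕ → Ω → ℝ} (hX : ∀ i, Measurable (X i))
    {f : ℕ → ℝ → ℝ} (hf : ∀ i, Measurable (f i)) {C : ℝ} (hC : ∀ i x, |f i x| ≤ C) (n : ℕ) :
    Integrable (fun ω => ∏ i ∈ range n, f i (X i ω)) μ := by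
  refine .of_bound (Finset.measurable_prod _ fun i _ => (hf i).comp (hX i)).aestronglyMeasurable
    (C ^ n) (ae_of_all _ fun ω => ?_)
  rw [norm_prod]
  exact (prod_le_prod (fun _ _ => norm_nonneg _) fun i _ => hC i _).trans_eq (by simp)

theorem ProbabilityTheory.iIndepFun.integral_prod_range_comp {X : ℕ → Ω → ℝ}
    (hindep : iIndepFun X μ) (hX : ∀ i, Measurable (X i)) {f : ℕ → ℝ → ℝ}
    (hf : ∀ i, Measurable (f i)) (n : ℕ) :
    ∫ ω, ∏ i ∈ range n, f i (X i ω) ∂μ = ∏ i ∈ range n, ∫ ω, f i (X i ω) ∂μ := by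
  have := iIndepFun.integral_fun_prod_comp (X := fun i : Fin n => X i) (f := fun i => f i)
    (hindep.precomp Fin.val_injective) (fun i => (hX i).aemeasurable)
    fun i => (hf i).aestronglyMeasurable
  simpa only [fun ω => Fin.prod_univ_eq_prod_range (fun i => f i (X i ω)) n,
    Fin.prod_univ_eq_prod_range (fun i => ∫ ω, f i (X i ω) ∂μ)] using this

lemma integral_prod_truncExp_mul {X : ℕ → Ω → ℝ} {k t : ℝ} (hX : ∀ i, Measurable (X i))
    (hindep : iIndepFun X μ) (hident : ∀ i, IdentDistrib (X i) (X 0) μ μ) {g : ℝ → ℝ}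
    (hg : Measurable g) (n : ℕ) :
    ∫ ω, (∏ i ∈ range n, truncExp k t (X i ω)) * g (X n ω) ∂μ
      = (∫ ω, truncExp k t (X 0 ω) ∂μ) ^ n * ∫ ω, g (X 0 ω) ∂μ := by
  -- one family of factors, so that `iIndepFun.integral_prod_range_comp` applies
  set f : ℕ → ℝ → ℝ := Function.update (fun _ => truncExp k t) n g
  have hf_lt : ∀ i < n, f i = truncExp k t := fun i hi => Function.update_of_ne hi.ne _ _
  have hf_n : f n = g := Function.update_self _ _ _
  have hf_meas : ∀ i, Measurable (f i) := fun i => by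
    rcases eq_or_ne i n with rfl | hi
    · rwa [hf_n]
    · simpa [f, hi] using measurable_truncExp k t
  calc ∫ ω, (∏ i ∈ range n, truncExp k t (X i ω)) * g (X n ω) ∂μ
      = ∫ ω, ∏ i ∈ range (n + 1), f i (X i ω) ∂μ := by
        congr with ω
        rw [prod_range_succ, hf_n]
        exact congrArg (· * _) (prod_congr rfl fun i hi => by rw [hf_lt i (mem_range.1 hi)])
    _ = ∏ i ∈ range (n + 1), ∫ ω, f i (X i ω) ∂μ := hindep.integral_prod_range_comp hX hf_meas _
    _ = _ := by
        have hg_int : ∫ ω, g (X n ω) ∂μ = ∫ ω, g (X 0 ω) ∂μ := ((hident n).comp hg).integral_eq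
        rw [prod_range_succ, hf_n, hg_int, prod_congr rfl fun i hi => ?_, prod_const, card_range]
        rw [hf_lt i (mem_range.1 hi)]
        exact ((hident i).comp (measurable_truncExp k t)).integral_eq

lemma integral_eq_intervalIntegral_measureReal_lt {f : Ω → ℝ} (hf : Integrable f μ)
    (hf_nn : ∀ ω, 0 ≤ f ω) {k : ℝ} (hk : 0 ≤ k) (hf_le : ∀ ω, f ω ≤ k) :
    ∫ ω, f ω ∂μ = ∫ x in (0)..k, μ.real {ω | x < f ω} := by
  rw [hf.integral_eq_integral_meas_lt (ae_of_all _ hf_nn), intervalIntegral.integral_of_le hk]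
  refine setIntegral_eq_of_subset_of_forall_sdiff_eq_zero measurableSet_Ioi
    Ioc_subset_Ioi_self fun x ⟨hx0, hx_notMem⟩ => ?_
  have hkx : k < x := lt_of_not_ge fun h => hx_notMem ⟨hx0, h⟩
  have hempty : {ω | x < f ω} = ∅ :=
    eq_empty_of_forall_notMem fun ω h => lt_asymm hkx (h.trans_le (hf_le ω))
  simp [hempty]

variable [IsProbabilityMeasure μ]

lemma integrable_indicator_Iic_comp {Y : Ω → ℝ} (hY : Measurable Y) (hnn : ∀ ω, 0 ≤ Y ω)
    (k : ℝ) :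
    Integrable (fun ω => (Iic k).indicator id (Y ω)) μ :=
  .of_bound ((measurable_id.indicator measurableSet_Iic).comp hY).aestronglyMeasurable |k|
    (ae_of_all _ fun ω => by
      by_cases h : Y ω ∈ Iic k
      · simpa [indicator_of_mem h, abs_of_nonneg (hnn ω)] using h.out.trans (le_abs_self k)
      · simp [indicator_of_notMem h])

lemma integral_indicator_Iic_le_of_tail_le {Y : Ω → ℝ} (hY : Measurable Y)
    (hnn : ∀ ω, 0 ≤ Y ω) {C x₀ : ℝ} (hC : 0 ≤ C) (hx₀ : 1 ≤ x₀)
    (htail : ∀ x, x₀ ≤ x → μ.real {ω | x < Y ω} ≤ C / x) {k : ℝ} (hk : 1 ≤ k) :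
    ∫ ω, (Iic k).indicator id (Y ω) ∂μ ≤ x₀ + C * log k := by
  set f : Ω → ℝ := fun ω => (Iic k).indicator id (Y ω)
  have hf_le_self : ∀ ω, f ω ≤ Y ω := fun ω =>
    indicator_apply_le' (fun _ => le_rfl) fun _ => hnn ω
  have hf_le : ∀ ω, f ω ≤ k := fun ω => indicator_apply_le' id fun _ => by linarith
  have hf_nn : ∀ ω, 0 ≤ f ω := fun ω => indicator_nonneg (fun _ _ => hnn ω) _
  have hf_int : Integrable f μ := integrable_indicator_Iic_comp hY hnn k
  have hlog : 0 ≤ C * log k := mul_nonneg hC (log_nonneg hk)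
  rcases le_total k x₀ with hkx | hxk
  · calc ∫ ω, f ω ∂μ ≤ ∫ _, k ∂μ := integral_mono hf_int (integrable_const k) hf_le
      _ ≤ x₀ + C * log k := by simp only [integral_const, probReal_univ, one_smul]; linarith
  have hx₀pos : 0 < x₀ := by linarith
  rw [integral_eq_intervalIntegral_measureReal_lt hf_int hf_nn (by linarith) hf_le]
  refine (intervalIntegral_le_add_mul_log_of_antitone (ψ := fun x => μ.real {ω | x < f ω})
    (C := C) (fun a b hab => measureReal_mono fun ω h => hab.trans_lt h)
    (fun _ => measureReal_le_one) hx₀pos hxk fun x hx => ?_).trans ?_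
  · exact (measureReal_mono fun ω h => h.trans_le (hf_le_self ω)).trans
      ((htail x hx.1).trans_eq (div_eq_mul_inv _ _))
  · gcongr
    exact div_le_self (by linarith) hx₀

lemma integral_truncExp_le {Y : Ω → ℝ} (hY : Measurable Y) (hnn : ∀ ω, 0 ≤ Y ω) {k t : ℝ}
    (ht : 0 ≤ t) (htk : t * k ≤ log 2) :
    ∫ ω, truncExp k t (Y ω) ∂μ
      ≤ μ.real {ω | Y ω ≤ k} + 2 * t * ∫ ω, (Iic k).indicator id (Y ω) ∂μ := by
  have hint_one : Integrable (fun ω => (Iic k).indicator 1 (Y ω)) μ :=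
    .of_bound ((measurable_one.indicator measurableSet_Iic).comp hY).aestronglyMeasurable 1
      (ae_of_all _ fun ω => (norm_indicator_le_norm_self (1 : ℝ → ℝ) (Y ω)).trans_eq norm_one)
  have hint_id := integrable_indicator_Iic_comp (μ := μ) hY hnn k
  calc ∫ ω, truncExp k t (Y ω) ∂μ
      ≤ ∫ ω, (Iic k).indicator 1 (Y ω) + 2 * t * (Iic k).indicator id (Y ω) ∂μ :=
        integral_mono (.of_bound ((measurable_truncExp k t).comp hY).aestronglyMeasurable
          (exp (t * k)) (ae_of_all _ fun ω => (norm_of_nonneg (truncExp_nonneg _ _ _)).trans_le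
            (truncExp_le ht _))) (hint_one.add (hint_id.const_mul _))
          fun ω => truncExp_le_indicator_add ht htk (hnn ω)
    _ = _ := by
        rw [integral_add hint_one (hint_id.const_mul _), integral_const_mul,
          integral_indicator_one_comp hY measurableSet_Iic]
        rfl

lemma integral_truncExp_le_one_sub_half {Y : Ω → ℝ} (hY : Measurable Y) (hnn : ∀ ω, 0 ≤ Y ω)
    {c x₀ k c' : ℝ} (hc : 0 < c) (hx₀ : 2 ≤ x₀)
    (hupper : ∀ x, x₀ ≤ x → μ.real {ω | x < Y ω} ≤ 2 * c / x) (hk : 2 ≤ k)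
    (hlower : c / (x₀ * k) ≤ μ.real {ω | k < Y ω}) (hc'₀ : 0 ≤ c') (hc'₁ : c' ≤ log 2 ^ 2)
    (hc'₂ : c' ≤ c / x₀ / (4 * (x₀ / log 2 + 2 * c))) :
    ∫ ω, truncExp k (c' / (k * log k)) (Y ω) ∂μ ≤ 1 - μ.real {ω | k < Y ω} / 2 := by
  set t := c' / (k * log k) with ht
  set A := x₀ / log 2 + 2 * c
  have hlog2 : 0 < log 2 := log_pos one_lt_two
  have hlogk : log 2 ≤ log k := log_le_log two_pos hk
  have hk₀ : 0 < k := by linarith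
  have hlogk₀ : 0 < log k := hlog2.trans_le hlogk
  have hx₀' : 0 < x₀ := by linarith
  have hA : 0 < A := by positivity
  have htk : t * k ≤ log 2 := by
    calc t * k = c' / log k := by rw [ht]; field_simp
      _ ≤ log 2 ^ 2 / log 2 := div_le_div₀ (by positivity) hc'₁ hlog2 hlogk
      _ = log 2 := by field_simp
  have hmean : ∫ ω, (Iic k).indicator id (Y ω) ∂μ ≤ A * log k := by
    refine (integral_indicator_Iic_le_of_tail_le hY hnn (by positivity) (by linarith) hupper
      (by linarith)).trans ?_
    have : x₀ ≤ x₀ / log 2 * log k := by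
      rw [div_mul_eq_mul_div, le_div_iff₀ hlog2]; gcongr
    linarith
  have hcompl : {ω | Y ω ≤ k} = {ω | k < Y ω}ᶜ := by ext; simp
  have hdrift : 2 * t * (A * log k) ≤ μ.real {ω | k < Y ω} / 2 := by
    calc 2 * t * (A * log k) = 2 * c' * A / k := by rw [ht]; field_simp
      _ ≤ 2 * (c / x₀ / (4 * A)) * A / k := by gcongr
      _ = c / (x₀ * k) / 2 := by field_simp; ring
      _ ≤ _ := by linarith
  calc ∫ ω, truncExp k t (Y ω) ∂μ
      ≤ μ.real {ω | Y ω ≤ k} + 2 * t * ∫ ω, (Iic k).indicator id (Y ω) ∂μ :=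
        integral_truncExp_le hY hnn (by positivity) htk
    _ ≤ 1 - μ.real {ω | k < Y ω} + μ.real {ω | k < Y ω} / 2 := by
        rw [hcompl, probReal_compl_eq_one_sub (measurableSet_lt measurable_const hY)]
        gcongr
        exact (mul_le_mul_of_nonneg_left hmean (by positivity)).trans hdrift
    _ = _ := by ring

section IID

variable {X : ℕ → Ω → ℝ} {k t : ℝ}

lemma measureReal_sum_ge_and_mem_le (hX : ∀ i, Measurable (X i)) (hindep : iIndepFun X μ)
    (hident : ∀ i, IdentDistrib (X i) (X 0) μ μ) (ht : 0 ≤ t) {A : Set ℝ}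
    (hA : MeasurableSet A) (s : ℝ) (n : ℕ) :
    μ.real {ω | (∀ i < n, X i ω ≤ k) ∧ s ≤ ∑ i ∈ range n, X i ω ∧ X n ω ∈ A}
      ≤ exp (-(t * s)) * μ.real (X 0 ⁻¹' A) * (∫ ω, truncExp k t (X 0 ω) ∂μ) ^ n := by
  set F : Ω → ℝ := fun ω => (∏ i ∈ range n, truncExp k t (X i ω)) * A.indicator 1 (X n ω)
  have hF_nn : ∀ ω, 0 ≤ F ω := fun ω =>
    mul_nonneg (prod_nonneg fun i _ => truncExp_nonneg _ _ _)
      (indicator_nonneg (fun _ _ => zero_le_one) _)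
  have hF_int : Integrable F μ :=
    (integrable_prod_range_comp hX (fun _ => measurable_truncExp k t)
      (fun _ x => (abs_of_nonneg (truncExp_nonneg _ _ _)).trans_le (truncExp_le ht x)) n).mul_bdd
      ((measurable_one.indicator hA).comp (hX n)).aestronglyMeasurable
      (ae_of_all _ fun ω => (norm_indicator_le_norm_self (1 : ℝ → ℝ) _).trans_eq norm_one)
  have hF_integral :
      ∫ ω, F ω ∂μ = μ.real (X 0 ⁻¹' A) * (∫ ω, truncExp k t (X 0 ω) ∂μ) ^ n := by
    rw [integral_prod_truncExp_mul hX hindep hident (measurable_one.indicator hA),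
      integral_indicator_one_comp (hX 0) hA, mul_comm]
  have hsub : {ω | (∀ i < n, X i ω ≤ k) ∧ s ≤ ∑ i ∈ range n, X i ω ∧ X n ω ∈ A}
      ⊆ {ω | exp (t * s) ≤ F ω} := by
    rintro ω ⟨hle, hs, hA⟩
    change exp (t * s) ≤ (∏ i ∈ range n, truncExp k t (X i ω)) * A.indicator 1 (X n ω)
    rw [indicator_of_mem hA, Pi.one_apply, mul_one,
      prod_congr rfl fun i hi => truncExp_of_le (hle i (mem_range.1 hi)), ← exp_sum, ← mul_sum]
    exact exp_le_exp.2 (mul_le_mul_of_nonneg_left hs ht)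
  calc _ ≤ μ.real {ω | exp (t * s) ≤ F ω} := measureReal_mono hsub
    _ ≤ (∫ ω, F ω ∂μ) / exp (t * s) := by
        rw [le_div_iff₀ (exp_pos _), mul_comm]
        exact mul_meas_ge_le_integral_of_nonneg (ae_of_all _ hF_nn) hF_int _
    _ = _ := by rw [hF_integral, exp_neg, div_eq_inv_mul, mul_assoc]

lemma measure_forall_le_eq_zero (hX : ∀ i, Measurable (X i)) (hindep : iIndepFun X μ)
    (hident : ∀ i, IdentDistrib (X i) (X 0) μ μ) (hnn : ∀ i ω, 0 ≤ X i ω) (ht : 0 ≤ t)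
    (hm : ∫ ω, truncExp k t (X 0 ω) ∂μ < 1) : μ {ω | ∀ i, X i ω ≤ k} = 0 := by
  set m := ∫ ω, truncExp k t (X 0 ω) ∂μ
  have hle : ∀ n, μ.real {ω | ∀ i, X i ω ≤ k} ≤ m ^ n := fun n =>
    calc μ.real {ω | ∀ i, X i ω ≤ k}
        ≤ μ.real {ω | (∀ i < n, X i ω ≤ k) ∧ 0 ≤ ∑ i ∈ range n, X i ω ∧ X n ω ∈ univ} :=
          measureReal_mono fun ω hω =>
            ⟨fun i _ => hω i, sum_nonneg fun i _ => hnn i ω, mem_univ _⟩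
      _ ≤ exp (-(t * 0)) * μ.real (X 0 ⁻¹' univ) * m ^ n :=
          measureReal_sum_ge_and_mem_le hX hindep hident ht .univ 0 n
      _ = m ^ n := by simp
  have hm₀ : 0 ≤ m := integral_nonneg fun ω => truncExp_nonneg _ _ _
  exact (measureReal_eq_zero_iff).1 (le_antisymm
    (ge_of_tendsto' (tendsto_pow_atTop_nhds_zero_of_lt_one hm₀ hm) hle) measureReal_nonneg)

theorem measureReal_exists_sum_ge_le (hX : ∀ i, Measurable (X i)) (hindep : iIndepFun X μ)
    (hident : ∀ i, IdentDistrib (X i) (X 0) μ μ) (hnn : ∀ i ω, 0 ≤ X i ω) (ht : 0 ≤ t)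
    (hm : ∫ ω, truncExp k t (X 0 ω) ∂μ < 1) (s : ℝ) :
    μ.real {ω | ∃ n, (∀ i < n, X i ω ≤ k) ∧ s ≤ ∑ i ∈ range n, X i ω}
      ≤ exp (-(t * s)) * μ.real {ω | k < X 0 ω} / (1 - ∫ ω, truncExp k t (X 0 ω) ∂μ) := by
  set m := ∫ ω, truncExp k t (X 0 ω) ∂μ
  set p := μ.real {ω | k < X 0 ω}
  have hm₀ : 0 ≤ m := integral_nonneg fun ω => truncExp_nonneg _ _ _
  set exceed : ℕ → Set Ω :=
    fun n => {ω | (∀ i < n, X i ω ≤ k) ∧ s ≤ ∑ i ∈ range n, X i ω ∧ X n ω ∈ Ioi k}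
  set never := {ω | ∀ i, X i ω ≤ k}
  have hsub : {ω | ∃ n, (∀ i < n, X i ω ≤ k) ∧ s ≤ ∑ i ∈ range n, X i ω}
      ⊆ (⋃ n, exceed n) ∪ never := fun ω ⟨_, hle, hs⟩ =>
    (exists_first_gt_or_forall_le (hnn · ω) hle hs).elim Or.inr
      fun ⟨n, h⟩ => Or.inl (mem_iUnion.2 ⟨n, h⟩)
  have hexceed : ∀ n, μ.real (exceed n) ≤ exp (-(t * s)) * p * m ^ n :=
    measureReal_sum_ge_and_mem_le hX hindep hident ht measurableSet_Ioi s
  have hnever : μ never = 0 := measure_forall_le_eq_zero hX hindep hident hnn ht hm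
  have hsum : HasSum (fun n => exp (-(t * s)) * p * m ^ n) (exp (-(t * s)) * p / (1 - m)) := by
    simpa [div_eq_mul_inv] using (hasSum_geometric_of_lt_one hm₀ hm).mul_left (exp (-(t * s)) * p)
  refine ENNReal.toReal_le_of_le_ofReal
    (div_nonneg (by positivity) (sub_nonneg.2 hm.le)) ?_
  calc μ {ω | ∃ n, (∀ i < n, X i ω ≤ k) ∧ s ≤ ∑ i ∈ range n, X i ω}
      ≤ μ (⋃ n, exceed n) + μ never := (measure_mono hsub).trans (measure_union_le _ _)
    _ ≤ ∑' n, μ (exceed n) := by rw [hnever, add_zero]; exact measure_iUnion_le _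
    _ ≤ ∑' n, ENNReal.ofReal (exp (-(t * s)) * p * m ^ n) :=
        ENNReal.tsum_le_tsum fun n => (ENNReal.le_ofReal_iff_toReal_le (by finiteness)
          (by positivity)).2 (hexceed n)
    _ = ENNReal.ofReal (exp (-(t * s)) * p / (1 - m)) := by
        rw [← ENNReal.ofReal_tsum_of_nonneg (fun n => by positivity) hsum.summable, hsum.tsum_eq]

theorem measureReal_exists_sum_ge_le_two_mul_exp (hX : ∀ i, Measurable (X i))
    (hindep : iIndepFun X μ) (hident : ∀ i, IdentDistrib (X i) (X 0) μ μ)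
    (hnn : ∀ i ω, 0 ≤ X i ω) (ht : 0 ≤ t) (hp : 0 < μ.real {ω | k < X 0 ω})
    (hm : ∫ ω, truncExp k t (X 0 ω) ∂μ ≤ 1 - μ.real {ω | k < X 0 ω} / 2) (s : ℝ) :
    μ.real {ω | ∃ n, (∀ i < n, X i ω ≤ k) ∧ s ≤ ∑ i ∈ range n, X i ω}
      ≤ 2 * exp (-(t * s)) :=
  calc _ ≤ exp (-(t * s)) * μ.real {ω | k < X 0 ω} / (1 - ∫ ω, truncExp k t (X 0 ω) ∂μ) :=
        measureReal_exists_sum_ge_le hX hindep hident hnn ht (by linarith) s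
    _ ≤ exp (-(t * s)) * μ.real {ω | k < X 0 ω} / (μ.real {ω | k < X 0 ω} / 2) :=
        div_le_div_of_nonneg_left (by positivity) (by positivity) (by linarith)
    _ = 2 * exp (-(t * s)) := by field_simp

end IID

end

theorem stmt_3
    {Ω : Type*} [MeasureSpace Ω] [IsProbabilityMeasure (ℙ : Measure Ω)]
    (X : ℕ → Ω → ℝ) (hmeas : ∀ i, Measurable (X i)) (hnn : ∀ i ω, 0 ≤ X i ω)
    (hindep : iIndepFun X ℙ)
    (hident : ∀ i, IdentDistrib (X i) (X 0) ℙ ℙ)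
    (c : ℝ) (hc : 0 < c)
    (htail : Tendsto (fun x : ℝ => (ℙ {ω | x < X 0 ω}).toReal / (c * x ^ (-(1 : ℝ))))
      atTop (nhds 1)) :
    ∃ c' : ℝ, 0 < c' ∧ ∃ C' : ℝ, 0 < C' ∧ ∀ k : ℝ, 2 ≤ k → ∀ lam : ℝ, 1 ≤ lam →
      (ℙ {ω | ∃ n : ℕ, (∀ i < n, X i ω ≤ k) ∧
          lam * (k * Real.log k) ≤ ∑ i ∈ Finset.range n, X i ω}).toReal
        ≤ C' * Real.exp (-(c' * lam)) := by
  obtain ⟨a, ha⟩ := eventually_atTop.1 (eventually_tail_bounds_of_tendsto hc htail)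
  set x₀ := max a 2
  have hx₀ : 2 ≤ x₀ := le_max_right _ _
  have htail' : ∀ x, x₀ ≤ x → _ := fun x hx => ha x ((le_max_left _ _).trans hx)
  have hlog2 : 0 < log 2 := log_pos one_lt_two
  refine ⟨min (log 2 ^ 2) (c / x₀ / (4 * (x₀ / log 2 + 2 * c))), by positivity, 2, two_pos,
    fun k hk lam _ => ?_⟩
  have hlower : c / (x₀ * k) ≤ (ℙ {ω | k < X 0 ω}).toReal :=
    div_mul_le_of_antitone (f := fun x => (ℙ {ω | x < X 0 ω}).toReal)
      (fun _ _ hxy => measureReal_mono fun _ h => hxy.trans_lt h) hc.le hx₀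
      (fun x hx => (htail' x hx).1) hk
  have hm := integral_truncExp_le_one_sub_half (hmeas 0) (hnn 0) hc hx₀
    (fun x hx => (htail' x hx).2) hk hlower (by positivity) (min_le_left _ _) (min_le_right _ _)
  have hklog : 0 < k * log k := mul_pos (by linarith) (log_pos (by linarith))
  refine (measureReal_exists_sum_ge_le_two_mul_exp hmeas hindep hident hnn (by positivity)
    (hlower.trans_lt' (by positivity)) hm (lam * (k * log k))).trans_eq ?_
  rw [mul_comm lam, ← mul_assoc, div_mul_cancel₀ _ hklog.ne']
end

section
/- Let (X_i)_{i≥1} be nonnegative i.i.d. random variables with P(X_1 ≥ x) ~ c·x^{-1} as x → ∞ for some c > 0, and let S_n = Σ_{i=1}^n X_i. Then there exists a constant C' < ∞ such that for all n ≥ 2 and all λ ≥ 1, P(S_n ≥ λ·n·log n) ≤ C'·λ^{-1}. -/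
/-!
Truncate at `t = λ n log n`. If `S_n ≥ t`, then either some `X_i ≥ t`, which has probability at
most `n K / t` by a tail bound `P(X ≥ x) ≤ K / x`, or the truncated sum `∑ min (X_i, t)` reaches
`t`. For the latter, Chebyshev's inequality is applied to the second moment, which by independence
is at most `n E[min(X, t)²] + (n E[min(X, t)])² ≤ 2 n K t + (n K (1 + log t))²`. A first moment
bound would lose a factor `log λ`; in the second moment bound that factor becomes harmless,
because `1 + log t = O(√λ log n)`.
-/

open MeasureTheory ProbabilityTheory Filter Real Set

section Arithmetic

variable {lam x : ℝ}

lemma one_half_le_log_of_two_le (hx : 2 ≤ x) : 1 / 2 ≤ log x := by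
  linarith [Real.log_le_log two_pos hx, Real.log_two_gt_d9]

lemma one_le_mul_mul_log (hlam : 1 ≤ lam) (hx : 2 ≤ x) : 1 ≤ lam * (x * log x) := by
  have hL := one_half_le_log_of_two_le hx
  have hxL : 1 ≤ x * log x := by nlinarith
  nlinarith

lemma one_add_log_mul_mul_log_le (hlam : 1 ≤ lam) (hx : 2 ≤ x) :
    1 + log (lam * (x * log x)) ≤ 6 * √lam * log x := by
  have hL := one_half_le_log_of_two_le hx
  have hsqrt : 1 ≤ √lam := Real.one_le_sqrt.mpr hlam
  have hlog_lam : log lam ≤ 2 * √lam - 2 := by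
    have h := Real.log_le_sub_one_of_pos (Real.sqrt_pos.2 (by linarith : 0 < lam))
    rw [Real.log_sqrt (by linarith)] at h
    linarith
  have hloglog : log (log x) ≤ log x - 1 := Real.log_le_sub_one_of_pos (by linarith)
  rw [Real.log_mul (by positivity) (by positivity), Real.log_mul (by positivity) (by positivity)]
  nlinarith [mul_nonneg (by linarith : 0 ≤ √lam) (by linarith : 0 ≤ log x - 1 / 2),
    mul_nonneg (by linarith : 0 ≤ log x) (by linarith : 0 ≤ √lam - 1)]

lemma tail_bound_at_mul_mul_log_le {K : ℝ} (hK : 0 ≤ K) (hlam : 1 ≤ lam) (hx : 2 ≤ x) :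
    3 * x * K / (lam * (x * log x))
        + (x * K * (1 + log (lam * (x * log x))) / (lam * (x * log x))) ^ 2
      ≤ (6 * K + 36 * K ^ 2) / lam := by
  have hL := one_half_le_log_of_two_le hx
  have ht := one_le_mul_mul_log hlam hx
  have hlam0 : 0 < lam := by linarith
  have hsq : √lam ^ 2 = lam := Real.sq_sqrt hlam0.le
  have hs0 : 0 < √lam := Real.sqrt_pos.2 hlam0
  have hlin : 3 * x * K / (lam * (x * log x)) ≤ 6 * K / lam := by
    rw [div_le_div_iff₀ (by positivity) hlam0]
    nlinarith [mul_nonneg (mul_nonneg hK hlam0.le) (by linarith : (0 : ℝ) ≤ x)]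
  have hquad : x * K * (1 + log (lam * (x * log x))) / (lam * (x * log x)) ≤ 6 * K / √lam := by
    rw [div_le_div_iff₀ (by positivity) hs0]
    have := one_add_log_mul_mul_log_le hlam hx
    calc x * K * (1 + log (lam * (x * log x))) * √lam
        ≤ x * K * (6 * √lam * log x) * √lam := by gcongr
      _ = 6 * K * (√lam ^ 2 * (x * log x)) := by ring
      _ = 6 * K * (lam * (x * log x)) := by rw [hsq]
  have h0 : 0 ≤ x * K * (1 + log (lam * (x * log x))) / (lam * (x * log x)) := by
    have := Real.log_nonneg ht
    positivity
  calc _ ≤ 6 * K / lam + (6 * K / √lam) ^ 2 := by gcongr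
    _ = (6 * K + 36 * K ^ 2) / lam := by rw [div_pow, hsq]; ring

end Arithmetic

section Integrals

variable {K T : ℝ}

lemma setLIntegral_ofReal_div_Ioc_one (hK : 0 ≤ K) (hT : 1 ≤ T) :
    ∫⁻ s in Ioc 1 T, ENNReal.ofReal (K / s) = ENNReal.ofReal (K * log T) := by
  have hcont : ContinuousOn (fun s : ℝ => K / s) (Icc 1 T) :=
    continuousOn_const.div continuousOn_id fun s hs => (zero_lt_one.trans_le hs.1).ne'
  rw [← ofReal_integral_eq_lintegral_ofReal
    ((hcont.integrableOn_Icc).mono_set Ioc_subset_Icc_self)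
    ((ae_restrict_iff' measurableSet_Ioc).2 (Eventually.of_forall fun s hs =>
      div_nonneg hK (zero_le_one.trans hs.1.le))),
    ← intervalIntegral.integral_of_le hT]
  simp_rw [div_eq_mul_inv]
  rw [intervalIntegral.integral_const_mul, integral_inv_of_pos one_pos (by linarith), div_one]

lemma setLIntegral_ofReal_mul_rpow_Ioc_sq (hK : 0 ≤ K) (hT : 0 ≤ T) :
    ∫⁻ s in Ioc 0 (T ^ 2), ENNReal.ofReal (K * s ^ (-(1 / 2) : ℝ))
      = ENNReal.ofReal (2 * K * T) := by
  rw [← ofReal_integral_eq_lintegral_ofReal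
    ((intervalIntegral.intervalIntegrable_rpow' (by norm_num)).const_mul K).1
    ((ae_restrict_iff' measurableSet_Ioc).2 (Eventually.of_forall fun s hs =>
      mul_nonneg hK (Real.rpow_nonneg hs.1.le _))),
    ← intervalIntegral.integral_of_le (sq_nonneg T), intervalIntegral.integral_const_mul,
    integral_rpow (Or.inl (by norm_num))]
  congr 1
  rw [show (-(1 / 2) + 1 : ℝ) = 1 / 2 by norm_num, ← Real.sqrt_eq_rpow, ← Real.sqrt_eq_rpow,
    Real.sqrt_sq hT, Real.sqrt_zero]
  ring

end Integrals

section Probability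

variable {Ω : Type*} {m : MeasurableSpace Ω} {μ : Measure Ω}

lemma exists_measure_le_le_div_of_tendsto [IsProbabilityMeasure μ] {Y : Ω → ℝ} {c : ℝ}
    (hc : 0 < c)
    (htail : Tendsto (fun x : ℝ => (μ {ω | x ≤ Y ω}).toReal / (c * x ^ (-(1 : ℝ))))
      atTop (nhds 1)) :
    ∃ K : ℝ, 1 ≤ K ∧ ∀ x > 0, μ {ω | x ≤ Y ω} ≤ ENNReal.ofReal (K / x) := by
  obtain ⟨x₀, hx₀⟩ := ((htail.eventually_lt_const one_lt_two).and
    (eventually_ge_atTop 1)).exists_forall_of_atTop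
  have hx₀1 : 1 ≤ x₀ := (hx₀ x₀ le_rfl).2
  refine ⟨x₀ + 2 * c, by linarith, fun x hx => ?_⟩
  rw [ENNReal.le_ofReal_iff_toReal_le (measure_ne_top _ _) (by positivity), le_div_iff₀ hx]
  rcases le_or_gt x₀ x with hxx | hxx
  · have hratio := (hx₀ x hxx).1
    rw [Real.rpow_neg_one, div_lt_iff₀ (by positivity)] at hratio
    have : (μ {ω | x ≤ Y ω}).toReal * x < 2 * c :=
      calc _ < 2 * (c * x⁻¹) * x := by gcongr
        _ = 2 * c := by field_simp
    linarith
  · have : (μ {ω | x ≤ Y ω}).toReal ≤ 1 := measureReal_le_one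
    nlinarith

lemma lintegral_ofReal_min_eq {f : Ω → ℝ} (hf : AEMeasurable f μ) (hf0 : 0 ≤ᵐ[μ] f) {b : ℝ}
    (hb : 0 ≤ b) :
    ∫⁻ ω, ENNReal.ofReal (min (f ω) b) ∂μ = ∫⁻ s in Ioc 0 b, μ {ω | s ≤ f ω} := by
  have htrunc : ∀ s, μ {ω | s ≤ min (f ω) b}
      = (Iic b).indicator (fun s => μ {ω | s ≤ f ω}) s := by
    intro s
    by_cases hs : s ≤ b <;> simp [hs]
  rw [lintegral_eq_lintegral_meas_le μ (hf0.mono fun ω h => le_min h hb)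
    (hf.min aemeasurable_const), funext htrunc, lintegral_indicator measurableSet_Iic,
    Measure.restrict_restrict measurableSet_Iic, inter_comm, Ioi_inter_Iic]

section TruncatedMoments

variable {Y : Ω → ℝ} {K T : ℝ}

lemma lintegral_ofReal_min_le [IsProbabilityMeasure μ] (hY : AEMeasurable Y μ)
    (hY0 : ∀ ω, 0 ≤ Y ω) (htail : ∀ x > 0, μ {ω | x ≤ Y ω} ≤ ENNReal.ofReal (K / x))
    (hK : 1 ≤ K) (hT : 1 ≤ T) :
    ∫⁻ ω, ENNReal.ofReal (min (Y ω) T) ∂μ ≤ ENNReal.ofReal (K * (1 + log T)) := by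
  rw [lintegral_ofReal_min_eq hY (Eventually.of_forall hY0) (by linarith),
    ← Ioc_union_Ioc_eq_Ioc zero_le_one hT,
    lintegral_union measurableSet_Ioc (Ioc_disjoint_Ioc_of_le le_rfl)]
  have hsmall : ∫⁻ s in Ioc 0 1, μ {ω | s ≤ Y ω} ≤ ENNReal.ofReal 1 :=
    calc ∫⁻ s in Ioc 0 1, μ {ω | s ≤ Y ω} ≤ ∫⁻ s in Ioc (0 : ℝ) 1, 1 :=
          setLIntegral_mono' measurableSet_Ioc fun _ _ => prob_le_one
      _ = ENNReal.ofReal 1 := by simp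
  have hlarge : ∫⁻ s in Ioc 1 T, μ {ω | s ≤ Y ω} ≤ ENNReal.ofReal (K * log T) :=
    calc ∫⁻ s in Ioc 1 T, μ {ω | s ≤ Y ω} ≤ ∫⁻ s in Ioc 1 T, ENNReal.ofReal (K / s) :=
          setLIntegral_mono' measurableSet_Ioc fun s hs => htail s (zero_lt_one.trans hs.1)
      _ = ENNReal.ofReal (K * log T) := setLIntegral_ofReal_div_Ioc_one (by linarith) hT
  calc _ ≤ ENNReal.ofReal 1 + ENNReal.ofReal (K * log T) := add_le_add hsmall hlarge
    _ = ENNReal.ofReal (1 + K * log T) :=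
        (ENNReal.ofReal_add zero_le_one (mul_nonneg (by linarith) (log_nonneg hT))).symm
    _ ≤ ENNReal.ofReal (K * (1 + log T)) := ENNReal.ofReal_le_ofReal (by nlinarith [log_nonneg hT])

lemma lintegral_ofReal_min_sq_le (hY : AEMeasurable Y μ)
    (hY0 : ∀ ω, 0 ≤ Y ω) (htail : ∀ x > 0, μ {ω | x ≤ Y ω} ≤ ENNReal.ofReal (K / x))
    (hK : 0 ≤ K) (hT : 0 ≤ T) :
    ∫⁻ ω, ENNReal.ofReal (min (Y ω) T) ^ 2 ∂μ ≤ ENNReal.ofReal (2 * K * T) := by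
  have hsq : ∀ ω, ENNReal.ofReal (min (Y ω) T) ^ 2 = ENNReal.ofReal (min (Y ω ^ 2) (T ^ 2)) :=
    fun ω => by
      rw [← ENNReal.ofReal_pow (le_min (hY0 ω) hT)]
      rcases le_total (Y ω) T with h | h
      · rw [min_eq_left h, min_eq_left (pow_le_pow_left₀ (hY0 ω) h 2)]
      · rw [min_eq_right h, min_eq_right (pow_le_pow_left₀ hT h 2)]
  have htail_sq : ∀ s ∈ Ioc 0 (T ^ 2),
      μ {ω | s ≤ Y ω ^ 2} ≤ ENNReal.ofReal (K * s ^ (-(1 / 2) : ℝ)) := fun s hs => by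
    have hs0 := hs.1
    calc μ {ω | s ≤ Y ω ^ 2} ≤ μ {ω | √s ≤ Y ω} := measure_mono fun ω (h : s ≤ Y ω ^ 2) =>
          (Real.sqrt_le_left (hY0 ω)).2 h
      _ ≤ ENNReal.ofReal (K / √s) := htail _ (Real.sqrt_pos.2 hs0)
      _ = ENNReal.ofReal (K * s ^ (-(1 / 2) : ℝ)) := by
          rw [Real.sqrt_eq_rpow, Real.rpow_neg hs0.le, div_eq_mul_inv]
  rw [lintegral_congr hsq, lintegral_ofReal_min_eq (hY.pow_const 2)
    (Eventually.of_forall fun ω => sq_nonneg _) (sq_nonneg T)]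
  calc _ ≤ _ := setLIntegral_mono' measurableSet_Ioc htail_sq
    _ = ENNReal.ofReal (2 * K * T) := setLIntegral_ofReal_mul_rpow_Ioc_sq hK hT

end TruncatedMoments

section Sums

variable {ι : Type*}

lemma lintegral_sum_sq_le_of_identDistrib {g : ι → Ω → ENNReal} {G : Ω → ENNReal}
    (hindep : Pairwise fun i j => IndepFun (g i) (g j) μ)
    (hident : ∀ i, IdentDistrib (g i) G μ μ) (s : Finset ι) :
    ∫⁻ ω, (∑ i ∈ s, g i ω) ^ 2 ∂μ
      ≤ s.card * ∫⁻ ω, G ω ^ 2 ∂μ + (s.card * ∫⁻ ω, G ω ∂μ) ^ 2 := by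
  classical
  have hg : ∀ i, AEMeasurable (g i) μ := fun i => (hident i).aemeasurable_fst
  have hterm : ∀ i j, ∫⁻ ω, g i ω * g j ω ∂μ
      ≤ (if i = j then ∫⁻ ω, G ω ^ 2 ∂μ else 0) + (∫⁻ ω, G ω ∂μ) ^ 2 := by
    intro i j
    rcases eq_or_ne i j with rfl | hij
    · simp_rw [if_pos, ← sq]
      exact ((hident i).comp (measurable_id.pow_const 2)).lintegral_eq.le.trans le_self_add
    · rw [if_neg hij, zero_add, lintegral_mul_eq_lintegral_mul_lintegral_of_indepFun'' (hg i)
        (hg j) (hindep hij), (hident i).lintegral_eq, (hident j).lintegral_eq, sq]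
  calc ∫⁻ ω, (∑ i ∈ s, g i ω) ^ 2 ∂μ = ∑ i ∈ s, ∑ j ∈ s, ∫⁻ ω, g i ω * g j ω ∂μ := by
        simp_rw [sq, Finset.sum_mul_sum]
        rw [lintegral_finsetSum' (f := fun i ω => ∑ j ∈ s, g i ω * g j ω) s fun i _ =>
          Finset.aemeasurable_fun_sum s fun j _ => (hg i).mul (hg j)]
        exact Finset.sum_congr rfl fun i _ =>
          lintegral_finsetSum' _ fun j _ => (hg i).mul (hg j)
    _ ≤ ∑ i ∈ s, ∑ j ∈ s, ((if i = j then ∫⁻ ω, G ω ^ 2 ∂μ else 0) + (∫⁻ ω, G ω ∂μ) ^ 2) :=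
        Finset.sum_le_sum fun i _ => Finset.sum_le_sum fun j _ => hterm i j
    _ = s.card * ∫⁻ ω, G ω ^ 2 ∂μ + (s.card * ∫⁻ ω, G ω ∂μ) ^ 2 := by
        simp only [Finset.sum_add_distrib, Finset.sum_ite_eq, Finset.sum_const, nsmul_eq_mul]
        rw [Finset.sum_ite_mem, Finset.inter_self, Finset.sum_const, nsmul_eq_mul]
        ring

lemma setOf_le_sum_subset (X : ι → Ω → ℝ) (s : Finset ι) (t : ℝ) :
    {ω | t ≤ ∑ i ∈ s, X i ω} ⊆
      (⋃ i ∈ s, {ω | t ≤ X i ω}) ∪ {ω | t ≤ ∑ i ∈ s, min (X i ω) t} := by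
  intro ω hω
  by_cases hbig : ∃ i ∈ s, t ≤ X i ω
  · obtain ⟨i, hi, hti⟩ := hbig
    exact Or.inl (mem_biUnion hi hti)
  · push Not at hbig
    refine Or.inr ?_
    simp only [mem_ofPred_eq] at hω ⊢
    rwa [Finset.sum_congr rfl fun i hi => min_eq_left (hbig i hi).le]

lemma measure_le_sum_le_of_tail_le [IsProbabilityMeasure μ] {X : ι → Ω → ℝ} {i₀ : ι} {K t : ℝ}
    (hnn : ∀ i ω, 0 ≤ X i ω) (hindep : Pairwise fun i j => IndepFun (X i) (X j) μ)
    (hident : ∀ i, IdentDistrib (X i) (X i₀) μ μ)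
    (htail : ∀ x > 0, μ {ω | x ≤ X i₀ ω} ≤ ENNReal.ofReal (K / x)) (hK : 1 ≤ K) (ht : 1 ≤ t)
    (s : Finset ι) :
    μ {ω | t ≤ ∑ i ∈ s, X i ω}
      ≤ ENNReal.ofReal (3 * s.card * K / t + (s.card * K * (1 + log t) / t) ^ 2) := by
  have ht0 : 0 < t := by linarith
  have hφ : Measurable fun x : ℝ => ENNReal.ofReal (min x t) :=
    ENNReal.measurable_ofReal.comp (measurable_id.min measurable_const)
  set g : ι → Ω → ENNReal := fun i ω => ENNReal.ofReal (min (X i ω) t)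
  have hmax : μ (⋃ i ∈ s, {ω | t ≤ X i ω}) ≤ ENNReal.ofReal (s.card * K / t) :=
    calc μ (⋃ i ∈ s, {ω | t ≤ X i ω}) ≤ ∑ i ∈ s, μ {ω | t ≤ X i ω} :=
          measure_biUnion_finset_le _ _
      _ = ∑ i ∈ s, μ {ω | t ≤ X i₀ ω} :=
          Finset.sum_congr rfl fun i _ => (hident i).measure_mem_eq measurableSet_Ici
      _ = s.card * μ {ω | t ≤ X i₀ ω} := by rw [Finset.sum_const, nsmul_eq_mul]
      _ ≤ s.card * ENNReal.ofReal (K / t) := by gcongr; exact htail t ht0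
      _ = ENNReal.ofReal (s.card * K / t) := by
          rw [← ENNReal.ofReal_natCast, ← ENNReal.ofReal_mul (by positivity), mul_div_assoc]
  have htrunc : μ {ω | t ≤ ∑ i ∈ s, min (X i ω) t}
      ≤ (∫⁻ ω, (∑ i ∈ s, g i ω) ^ 2 ∂μ) / ENNReal.ofReal t ^ 2 := by
    refine (measure_mono fun ω (hω : t ≤ ∑ i ∈ s, min (X i ω) t) => ?_).trans
      (meas_ge_le_lintegral_div ((Finset.aemeasurable_fun_sum s fun i _ =>
        hφ.comp_aemeasurable (hident i).aemeasurable_fst).pow_const 2) ?_ ?_)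
    · have hsum : ENNReal.ofReal t ≤ ∑ i ∈ s, g i ω := by
        rw [← ENNReal.ofReal_sum_of_nonneg fun i _ => le_min (hnn i ω) ht0.le]
        exact ENNReal.ofReal_le_ofReal hω
      exact pow_le_pow_left' hsum 2
    · exact pow_ne_zero _ (ENNReal.ofReal_pos.2 ht0).ne'
    · exact ENNReal.pow_ne_top ENNReal.ofReal_ne_top
  have hmoment : ∫⁻ ω, (∑ i ∈ s, g i ω) ^ 2 ∂μ
      ≤ s.card * ENNReal.ofReal (2 * K * t)
        + (s.card * ENNReal.ofReal (K * (1 + log t))) ^ 2 := by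
    refine (lintegral_sum_sq_le_of_identDistrib (G := g i₀)
      (fun i j hij => (hindep hij).comp hφ hφ) (fun i => (hident i).comp hφ) s).trans ?_
    gcongr
    · exact lintegral_ofReal_min_sq_le (hident i₀).aemeasurable_fst (hnn i₀) htail
        (by linarith) ht0.le
    · exact lintegral_ofReal_min_le (hident i₀).aemeasurable_fst (hnn i₀) htail hK ht
  have hlog : 0 ≤ log t := log_nonneg ht
  calc μ {ω | t ≤ ∑ i ∈ s, X i ω}
      ≤ μ ((⋃ i ∈ s, {ω | t ≤ X i ω}) ∪ {ω | t ≤ ∑ i ∈ s, min (X i ω) t}) :=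
        measure_mono (setOf_le_sum_subset X s t)
    _ ≤ μ (⋃ i ∈ s, {ω | t ≤ X i ω}) + μ {ω | t ≤ ∑ i ∈ s, min (X i ω) t} :=
        measure_union_le _ _
    _ ≤ ENNReal.ofReal (s.card * K / t) + (s.card * ENNReal.ofReal (2 * K * t)
          + (s.card * ENNReal.ofReal (K * (1 + log t))) ^ 2) / ENNReal.ofReal t ^ 2 :=
        add_le_add hmax (htrunc.trans (ENNReal.div_le_div_right hmoment _))
    _ = ENNReal.ofReal (3 * s.card * K / t + (s.card * K * (1 + log t) / t) ^ 2) := by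
        rw [← ENNReal.ofReal_natCast, ← ENNReal.ofReal_mul (Nat.cast_nonneg _),
          ← ENNReal.ofReal_mul (Nat.cast_nonneg _), ← ENNReal.ofReal_pow (by positivity),
          ← ENNReal.ofReal_add (by positivity) (by positivity), ← ENNReal.ofReal_pow ht0.le,
          ← ENNReal.ofReal_div_of_pos (by positivity),
          ← ENNReal.ofReal_add (by positivity) (by positivity)]
        congr 1
        field_simp
        ring

end Sums

end Probability

theorem stmt_5_general
    {Ω : Type*} [MeasureSpace Ω] [IsProbabilityMeasure (ℙ : Measure Ω)]
    (X : ℕ → Ω → ℝ) (hnn : ∀ i ω, 0 ≤ X i ω)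
    (hindep : iIndepFun X ℙ)
    (hident : ∀ i, IdentDistrib (X i) (X 0) ℙ ℙ)
    (c : ℝ) (hc : 0 < c)
    (htail : Tendsto (fun x : ℝ => (ℙ {ω | x ≤ X 0 ω}).toReal / (c * x ^ (-(1 : ℝ))))
      atTop (nhds 1)) :
    ∃ C' : ℝ, ∀ n : ℕ, 2 ≤ n → ∀ lam : ℝ, 1 ≤ lam →
      (ℙ {ω | lam * ((n : ℝ) * Real.log n) ≤ ∑ i ∈ Finset.range n, X i ω}).toReal
        ≤ C' * lam ^ (-(1 : ℝ)) := by
  obtain ⟨K, hK, hKtail⟩ := exists_measure_le_le_div_of_tendsto hc htail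
  refine ⟨6 * K + 36 * K ^ 2, fun n hn lam hlam => ?_⟩
  have hx : (2 : ℝ) ≤ n := by exact_mod_cast hn
  have hbound := measure_le_sum_le_of_tail_le hnn (fun i j hij => hindep.indepFun hij) hident
    hKtail hK (one_le_mul_mul_log hlam hx) (Finset.range n)
  rw [Finset.card_range] at hbound
  calc _ ≤ (6 * K + 36 * K ^ 2) / lam := ENNReal.toReal_le_of_le_ofReal (by positivity)
        (hbound.trans (ENNReal.ofReal_le_ofReal
          (tail_bound_at_mul_mul_log_le (by linarith) hlam hx)))
    _ = (6 * K + 36 * K ^ 2) * lam ^ (-(1 : ℝ)) := by rw [rpow_neg_one, div_eq_mul_inv]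

theorem stmt_5
    {Ω : Type*} [MeasureSpace Ω] [IsProbabilityMeasure (ℙ : Measure Ω)]
    (X : ℕ → Ω → ℝ) (hmeas : ∀ i, Measurable (X i)) (hnn : ∀ i ω, 0 ≤ X i ω)
    (hindep : iIndepFun X ℙ)
    (hident : ∀ i, IdentDistrib (X i) (X 0) ℙ ℙ)
    (c : ℝ) (hc : 0 < c)
    (htail : Tendsto (fun x : ℝ => (ℙ {ω | x ≤ X 0 ω}).toReal / (c * x ^ (-(1 : ℝ))))
      atTop (nhds 1)) :
    ∃ C' : ℝ, ∀ n : ℕ, 2 ≤ n → ∀ lam : ℝ, 1 ≤ lam →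
      (ℙ {ω | lam * ((n : ℝ) * Real.log n) ≤ ∑ i ∈ Finset.range n, X i ω}).toReal
        ≤ C' * lam ^ (-(1 : ℝ)) :=
  stmt_5_general X hnn hindep hident c hc htail
end
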